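/- arXiv:1901.08483 — 5 statements merged into one kernel-verified Lean document; each statement's English description precedes it below -/
import Mathlib

section
/- Under hypotheses (C1)–(C6), assume there exist τ, ξ1, ξ2 ∈ (0,∞) such that 0 ≤ f(t,u,v) ≤ τ·u for every (t,u,v) ∈ [0,1]×[0,∞)², h_i[u] ≤ ξ_i·‖u‖_∞ for every u ∈ P and i = 1,2, and λ·τ·K + η1·ξ1·γ1(1) + η2·ξ2·γ2(1) < 1. Then the only possible solution in P of the equation u(t) = η1 γ1(t) h1[u] + η2 γ2(t) h2[u] + λ ∫₀¹ k(t,s) f(s, u(s), u'(s)) ds is the zero function. -/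
open MeasureTheory Set Bornology

noncomputable section

/-- The interval `[0,1]`. -/
abbrev I01 : Set ℝ := Set.Icc 0 1

/-- The space `C[0,1] × C[0,1]`; an element of `C¹[0,1]` is encoded as the pair `(u, u')`.
The product norm is exactly `‖(u,u')‖ = max {‖u‖_∞, ‖u'‖_∞}`. -/
abbrev E := C(I01, ℝ) × C(I01, ℝ)

/-- The extension to `ℝ` of a continuous function on `[0,1]` (constant outside `[0,1]`). -/
def ext01 (g : C(I01, ℝ)) : ℝ → ℝ := Set.IccExtend zero_le_one ⇑g

/-- `p = (u, u')` encodes a `C¹` function: `u'` is the derivative of `u` on `[0,1]`. -/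
def IsC1 (p : E) : Prop :=
  ∀ t : I01, HasDerivWithinAt (ext01 p.1) (p.2 t) I01 (t : ℝ)

/-- The cone `P` of non-negative `C¹[0,1]` functions with non-negative derivative. -/
def coneP : Set E :=
  {p | IsC1 p ∧ ∀ t : I01, 0 ≤ p.1 t ∧ 0 ≤ p.2 t}

/-- `K = ∫₀¹ k(1,s) ds`. -/
def Kconst (k : ℝ → ℝ → ℝ) : ℝ := ∫ s in (0:ℝ)..1, k 1 s

/-- Theorem 2.3 in the paper: non-existence of nontrivial solutions in the cone `P` of the
perturbed Hammerstein integral equation. -/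
theorem nonexistence_of_nontrivial_solution
    (k kt : ℝ → ℝ → ℝ) (Φ Ψ : ℝ → ℝ) (f : ℝ → ℝ → ℝ → ℝ)
    (γ₁ γ₂ γ₁' γ₂' : ℝ → ℝ) (η₁ η₂ lam : ℝ) (h₁ h₂ : E → ℝ)
    -- (C₁)
    (hk_meas : Measurable (Function.uncurry k))
    (hk_cont : ∀ᵐ s ∂(volume.restrict I01), ContinuousOn (fun t => k t s) I01)
    (hk_nonneg : ∀ t ∈ I01, ∀ s ∈ I01, 0 ≤ k t s)
    (hΦ : IntegrableOn Φ I01)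
    (hkΦ : ∀ᵐ s ∂(volume.restrict I01), ∀ t ∈ I01, k t s ≤ Φ s)
    -- (C₂)
    (hkt : ∀ᵐ s ∂(volume.restrict I01),
      (∀ t ∈ I01, HasDerivWithinAt (fun x => k x s) (kt t s) I01 t) ∧
      ContinuousOn (fun t => kt t s) I01 ∧
      ∀ t ∈ I01, 0 ≤ kt t s ∧ kt t s ≤ Ψ s)
    (hΨ : IntegrableOn Ψ I01)
    -- (C₃)
    (hf_cont : ContinuousOn (fun x : ℝ × ℝ × ℝ => f x.1 x.2.1 x.2.2)
      (I01 ×ˢ Ici (0:ℝ) ×ˢ Ici (0:ℝ)))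
    (hf_nonneg : ∀ t ∈ I01, ∀ u ∈ Ici (0:ℝ), ∀ v ∈ Ici (0:ℝ), 0 ≤ f t u v)
    -- (C₄)
    (hγ₁ : ∀ t ∈ I01, HasDerivWithinAt γ₁ (γ₁' t) I01 t)
    (hγ₂ : ∀ t ∈ I01, HasDerivWithinAt γ₂ (γ₂' t) I01 t)
    (hγ₁'c : ContinuousOn γ₁' I01) (hγ₂'c : ContinuousOn γ₂' I01)
    (hγ_nonneg : ∀ t ∈ I01, 0 ≤ γ₁ t ∧ 0 ≤ γ₂ t ∧ 0 ≤ γ₁' t ∧ 0 ≤ γ₂' t)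
    -- (C₅)
    (hη₁ : 0 ≤ η₁) (hη₂ : 0 ≤ η₂) (hlam : 0 ≤ lam)
    -- (C₆)
    (hh₁_nonneg : ∀ p ∈ coneP, 0 ≤ h₁ p) (hh₂_nonneg : ∀ p ∈ coneP, 0 ≤ h₂ p)
    (hh₁_cont : ContinuousOn h₁ coneP) (hh₂_cont : ContinuousOn h₂ coneP)
    (hh₁_bdd : ∀ B ⊆ coneP, IsBounded B → IsBounded (h₁ '' B))
    (hh₂_bdd : ∀ B ⊆ coneP, IsBounded B → IsBounded (h₂ '' B))
    -- the non-existence hypotheses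
    (τ ξ₁ ξ₂ : ℝ) (hτ : 0 < τ) (hξ₁ : 0 < ξ₁) (hξ₂ : 0 < ξ₂)
    (hfτ : ∀ t ∈ I01, ∀ u ∈ Ici (0:ℝ), ∀ v ∈ Ici (0:ℝ), f t u v ≤ τ * u)
    (hh₁ξ : ∀ p ∈ coneP, h₁ p ≤ ξ₁ * ‖p.1‖)
    (hh₂ξ : ∀ p ∈ coneP, h₂ p ≤ ξ₂ * ‖p.1‖)
    (hlt : lam * τ * Kconst k + η₁ * ξ₁ * γ₁ 1 + η₂ * ξ₂ * γ₂ 1 < 1) :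
    ∀ p ∈ coneP,
      (∀ t : I01, p.1 t = η₁ * γ₁ (t : ℝ) * h₁ p + η₂ * γ₂ (t : ℝ) * h₂ p +
        lam * ∫ s in (0:ℝ)..1, k (t : ℝ) s * f s (ext01 p.1 s) (ext01 p.2 s)) →
      p = 0 := by
  intro p hp heq
  obtain ⟨hC1, hpos⟩ := hp
  have h01 : (1:ℝ) ∈ I01 := ⟨zero_le_one, le_refl 1⟩
  set u := p.1 with hu
  set v := p.2 with hv
  set M := ‖u‖ with hM
  have hextu_eq : ∀ x : I01, ext01 u (x:ℝ) = u x := fun x => by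
    rw [ext01, Set.IccExtend_of_mem _ _ x.2]
  have hextu_nonneg : ∀ s : ℝ, 0 ≤ ext01 u s := fun s => (hpos _).1
  have hextv_nonneg : ∀ s : ℝ, 0 ≤ ext01 v s := fun s => (hpos _).2
  have hextu_le : ∀ s : ℝ, ext01 u s ≤ M := fun s => by
    have h := u.norm_coe_le_norm (Set.projIcc 0 1 zero_le_one s)
    rw [Real.norm_eq_abs, abs_of_nonneg (hpos _).1] at h
    exact h
  -- u is monotone on [0,1]
  have hcontg : Continuous (ext01 u) := u.continuous.Icc_extend'
  have hmono : MonotoneOn (ext01 u) I01 := by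
    apply monotoneOn_of_deriv_nonneg (convex_Icc 0 1) hcontg.continuousOn
    · intro x hx
      rw [interior_Icc] at hx
      exact ((hC1 ⟨x, Ioo_subset_Icc_self hx⟩).hasDerivAt
        (Icc_mem_nhds hx.1 hx.2)).differentiableAt.differentiableWithinAt
    · intro x hx
      rw [interior_Icc] at hx
      have hderiv := ((hC1 ⟨x, Ioo_subset_Icc_self hx⟩).hasDerivAt
        (Icc_mem_nhds hx.1 hx.2)).deriv
      rw [hderiv]
      exact (hpos _).2
  -- the norm of u is attained at 1
  have hMle : M ≤ u ⟨1, h01⟩ := by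
    rw [hM]
    refine (ContinuousMap.norm_le u (hpos ⟨1, h01⟩).1).mpr fun x => ?_
    rw [Real.norm_eq_abs, abs_of_nonneg (hpos x).1]
    have h := hmono x.2 h01 x.2.2
    rwa [hextu_eq x, hextu_eq ⟨1, h01⟩] at h
  have hMnonneg : 0 ≤ M := norm_nonneg u
  -- bounds on the nonlinearity along the solution
  have hFle : ∀ s ∈ I01, f s (ext01 u s) (ext01 v s) ≤ τ * M := fun s hs => by
    calc f s (ext01 u s) (ext01 v s) ≤ τ * ext01 u s :=
          hfτ s hs _ (hextu_nonneg s) _ (hextv_nonneg s)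
      _ ≤ τ * M := by nlinarith [hextu_le s]
  have hFnonneg : ∀ s ∈ I01, 0 ≤ f s (ext01 u s) (ext01 v s) := fun s hs =>
    hf_nonneg s hs _ (hextu_nonneg s) _ (hextv_nonneg s)
  have hk1m : Measurable (fun s => k 1 s) :=
    hk_meas.comp (measurable_const.prodMk measurable_id)
  have hkΦ1 : ∀ᵐ s ∂(volume.restrict I01), k 1 s ≤ Φ s := by
    filter_upwards [hkΦ] with s hs using hs 1 h01
  have hk1nonneg : ∀ᵐ s ∂(volume.restrict I01), 0 ≤ k 1 s := by
    filter_upwards [ae_restrict_mem measurableSet_Icc] with s hs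
      using hk_nonneg 1 h01 s hs
  have hFcont : ContinuousOn (fun s => f s (ext01 u s) (ext01 v s)) I01 := by
    have hmap : Continuous (fun s : ℝ => (s, ext01 u s, ext01 v s)) :=
      continuous_id.prodMk ((u.continuous.Icc_extend').prodMk (v.continuous.Icc_extend'))
    exact hf_cont.comp hmap.continuousOn fun s hs => ⟨hs, hextu_nonneg s, hextv_nonneg s⟩
  have hFmeas : AEStronglyMeasurable (fun s => f s (ext01 u s) (ext01 v s))
      (volume.restrict I01) :=
    hFcont.aestronglyMeasurable measurableSet_Icc
  have hk1int : IntegrableOn (fun s => k 1 s) I01 := by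
    refine Integrable.mono' hΦ hk1m.aestronglyMeasurable ?_
    filter_upwards [hkΦ1, hk1nonneg] with s h1 h2
    rwa [Real.norm_eq_abs, abs_of_nonneg h2]
  have hgint : IntegrableOn (fun s => k 1 s * f s (ext01 u s) (ext01 v s)) I01 := by
    refine Integrable.mono' (hΦ.const_mul (τ * M)) (hk1m.aestronglyMeasurable.mul hFmeas) ?_
    filter_upwards [hkΦ1, hk1nonneg, ae_restrict_mem measurableSet_Icc] with s h1 h2 hs
    rw [Real.norm_eq_abs, abs_of_nonneg (mul_nonneg h2 (hFnonneg s hs))]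
    calc k 1 s * f s (ext01 u s) (ext01 v s) ≤ Φ s * (τ * M) :=
          mul_le_mul h1 (hFle s hs) (hFnonneg s hs) (h2.trans h1)
      _ = τ * M * Φ s := by ring
  -- the integral estimate
  have hint_le : (∫ s in (0:ℝ)..1, k 1 s * f s (ext01 u s) (ext01 v s)) ≤ τ * M * Kconst k := by
    have hii1 : IntervalIntegrable (fun s => k 1 s * f s (ext01 u s) (ext01 v s)) volume 0 1 :=
      (intervalIntegrable_iff_integrableOn_Icc_of_le zero_le_one).mpr hgint
    have hii2 : IntervalIntegrable (fun s => τ * M * k 1 s) volume 0 1 :=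
      (intervalIntegrable_iff_integrableOn_Icc_of_le zero_le_one).mpr (hk1int.const_mul _)
    have h3 : (∫ s in (0:ℝ)..1, k 1 s * f s (ext01 u s) (ext01 v s))
        ≤ ∫ s in (0:ℝ)..1, τ * M * k 1 s := by
      apply intervalIntegral.integral_mono_ae_restrict zero_le_one hii1 hii2
      filter_upwards [hk1nonneg, ae_restrict_mem measurableSet_Icc] with s h2 hs
      calc k 1 s * f s (ext01 u s) (ext01 v s) ≤ k 1 s * (τ * M) :=
            mul_le_mul_of_nonneg_left (hFle s hs) h2
        _ = τ * M * k 1 s := by ring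
    calc (∫ s in (0:ℝ)..1, k 1 s * f s (ext01 u s) (ext01 v s))
        ≤ ∫ s in (0:ℝ)..1, τ * M * k 1 s := h3
      _ = τ * M * Kconst k := by rw [Kconst, ← intervalIntegral.integral_const_mul]
  -- evaluate the equation at t = 1
  have heq1 := heq ⟨1, h01⟩
  have hc : ((⟨1, h01⟩ : I01) : ℝ) = 1 := rfl
  rw [hc] at heq1
  have hγn := hγ_nonneg 1 h01
  have hpP : p ∈ coneP := ⟨hC1, hpos⟩
  have hh1 : h₁ p ≤ ξ₁ * M := hh₁ξ p hpP
  have hh2 : h₂ p ≤ ξ₂ * M := hh₂ξ p hpP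
  have hub : u ⟨1, h01⟩ ≤ (lam * τ * Kconst k + η₁ * ξ₁ * γ₁ 1 + η₂ * ξ₂ * γ₂ 1) * M := by
    rw [heq1]
    have e1 : η₁ * γ₁ 1 * h₁ p ≤ η₁ * γ₁ 1 * (ξ₁ * M) :=
      mul_le_mul_of_nonneg_left hh1 (mul_nonneg hη₁ hγn.1)
    have e2 : η₂ * γ₂ 1 * h₂ p ≤ η₂ * γ₂ 1 * (ξ₂ * M) :=
      mul_le_mul_of_nonneg_left hh2 (mul_nonneg hη₂ hγn.2.1)
    have e3 : lam * (∫ s in (0:ℝ)..1, k 1 s * f s (ext01 u s) (ext01 v s))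
        ≤ lam * (τ * M * Kconst k) := mul_le_mul_of_nonneg_left hint_le hlam
    nlinarith [e1, e2, e3]
  have hM0 : M = 0 := by nlinarith [hMle.trans hub]
  have hu0 : u = 0 := norm_eq_zero.mp hM0
  have hv0 : v = 0 := by
    ext t
    have hd := hC1 t
    rw [show p.1 = u from rfl, hu0] at hd
    have hz : ext01 (0 : C(I01, ℝ)) = fun _ => (0:ℝ) := by
      funext s; rfl
    rw [hz] at hd
    have h1 : v t = derivWithin (fun _ : ℝ => (0:ℝ)) I01 (t:ℝ) :=
      (hd.derivWithin (uniqueDiffOn_Icc_zero_one _ t.2)).symm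
    have h2 : derivWithin (fun _ : ℝ => (0:ℝ)) I01 (t:ℝ) = 0 :=
      (hasDerivWithinAt_const (t:ℝ) I01 (0:ℝ)).derivWithin (uniqueDiffOn_Icc_zero_one _ t.2)
    rw [h1, h2]
    rfl
  have : p = (u, v) := rfl
  rw [this, hu0, hv0]
  rfl
end
end

section
/- Under hypotheses (C1)–(C6), the operator T defined by Tu(t) := η1 γ1(t) h1[u] + η2 γ2(t) h2[u] + λ ∫₀¹ k(t,s) f(s, u(s), u'(s)) ds maps the cone P into itself; that is, for every u ∈ P, the function Tu belongs to C¹[0,1] and satisfies (Tu)(t) ≥ 0 and (Tu)'(t) ≥ 0 for every t ∈ [0,1]. -/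
/-! `Tu` is a non-negative combination of three elements of the cone `P`: `γ₁` and `γ₂` with their
derivatives, and the kernel integral `t ↦ ∫ k(t,s) g(s) ds` with `g := f(·, u, u')`, which is
continuous and non-negative on `[0,1]`. Since `P` is closed under addition and non-negative
scaling, it remains to place the kernel integral in `P`. It is differentiated under the integral
sign: by the mean value theorem the difference quotients of `k(·,s)` are bounded by `Ψ(s)`, so
dominated convergence applies to them; the same bound gives the continuity of the derivative. -/

open MeasureTheory Set Bornology

noncomputable section

open Filter Topology

section ParametricIntegral

variable {α G : Type*} [MeasurableSpace α] {μ : Measure α}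
  [NormedAddCommGroup G] [NormedSpace ℝ G]
  {F : ℝ → α → G} {s : Set ℝ} {x₀ : ℝ}

theorem aestronglyMeasurable_of_hasDerivWithinAt {F' : α → G} (hx₀ : AccPt x₀ (𝓟 s))
    (hF_meas : ∀ x, AEStronglyMeasurable (F x) μ)
    (hF' : ∀ᵐ a ∂μ, HasDerivWithinAt (F · a) (F' a) s x₀) :
    AEStronglyMeasurable F' μ :=
  haveI := accPt_principal_iff_nhdsWithin.mp hx₀
  aestronglyMeasurable_of_tendsto_ae (𝓝[s \ {x₀}] x₀)
    (fun x => ((hF_meas x).sub (hF_meas x₀)).const_smul _)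
    (hF'.mono fun _ ha => hasDerivWithinAt_iff_tendsto_slope.mp ha)

theorem hasDerivWithinAt_integral_of_dominated_of_deriv_le {F' : ℝ → α → G} {bound : α → ℝ}
    (hs : Convex ℝ s) (hx₀ : x₀ ∈ s) (hF_int : ∀ x ∈ s, Integrable (F x) μ)
    (h_diff : ∀ᵐ a ∂μ, ∀ x ∈ s, HasDerivWithinAt (F · a) (F' x a) s x)
    (h_bound : ∀ᵐ a ∂μ, ∀ x ∈ s, ‖F' x a‖ ≤ bound a) (bound_integrable : Integrable bound μ) :
    HasDerivWithinAt (fun x => ∫ a, F x a ∂μ) (∫ a, F' x₀ a ∂μ) s x₀ := by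
  have slope_integral : ∀ x ∈ s,
      slope (fun x => ∫ a, F x a ∂μ) x₀ x = ∫ a, slope (F · a) x₀ x ∂μ := fun x hx => by
    simp only [slope_def_module]
    rw [integral_smul, integral_sub (hF_int x hx) (hF_int x₀ hx₀)]
  have slope_le : ∀ᵐ a ∂μ, ∀ x ∈ s, x ≠ x₀ → ‖slope (F · a) x₀ x‖ ≤ bound a := by
    filter_upwards [h_diff, h_bound] with a hda hba x hx hxx₀
    have hlip := hs.norm_image_sub_le_of_norm_hasDerivWithin_le hda hba hx₀ hx
    rw [slope_def_module, norm_smul, norm_inv,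
      inv_mul_le_iff₀ (norm_pos_iff.2 (sub_ne_zero.2 hxx₀)), mul_comm]
    exact hlip
  rw [hasDerivWithinAt_iff_tendsto_slope]
  refine (tendsto_integral_filter_of_dominated_convergence (F := fun x a => slope (F · a) x₀ x)
    bound ?_ ?_ bound_integrable ?_).congr' ?_
  · filter_upwards [self_mem_nhdsWithin] with x hx
    exact (((hF_int x hx.1).sub (hF_int x₀ hx₀)).aestronglyMeasurable).const_smul _
  · filter_upwards [self_mem_nhdsWithin] with x hx
    filter_upwards [slope_le] with a ha using ha x hx.1 hx.2
  · filter_upwards [h_diff] with a ha using hasDerivWithinAt_iff_tendsto_slope.mp (ha x₀ hx₀)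
  · filter_upwards [self_mem_nhdsWithin] with x hx using (slope_integral x hx.1).symm

end ParametricIntegral

section KernelIntegral

variable {α : Type*} [MeasurableSpace α] {μ : Measure α} {k kt : ℝ → α → ℝ} {Ψ g : α → ℝ}
  {M t : ℝ}

theorem hasDerivWithinAt_kernel_integral (hk_int : ∀ t ∈ I01, Integrable (k t) μ)
    (h_diff : ∀ᵐ a ∂μ, ∀ t ∈ I01, HasDerivWithinAt (k · a) (kt t a) I01 t)
    (h_bound : ∀ᵐ a ∂μ, ∀ t ∈ I01, ‖kt t a‖ ≤ Ψ a) (hΨ : Integrable Ψ μ)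
    (hg : AEStronglyMeasurable g μ) (hgM : ∀ᵐ a ∂μ, ‖g a‖ ≤ M) (ht : t ∈ I01) :
    HasDerivWithinAt (fun t => ∫ a, k t a * g a ∂μ) (∫ a, kt t a * g a ∂μ) I01 t :=
  hasDerivWithinAt_integral_of_dominated_of_deriv_le (bound := fun a => Ψ a * M)
    (convex_Icc 0 1) ht
    (fun t ht => (hk_int t ht).mul_bdd hg hgM)
    (h_diff.mono fun a ha t ht => (ha t ht).mul_const (g a))
    (by filter_upwards [h_bound, hgM] with a hka hga t ht using norm_mul_le_of_le (hka t ht) hga)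
    (hΨ.mul_const M)

theorem continuousOn_kernel_integral
    (hk_meas : ∀ t, AEStronglyMeasurable (k t) μ)
    (h_diff : ∀ᵐ a ∂μ, ∀ t ∈ I01, HasDerivWithinAt (k · a) (kt t a) I01 t)
    (h_cont : ∀ᵐ a ∂μ, ContinuousOn (kt · a) I01)
    (h_bound : ∀ᵐ a ∂μ, ∀ t ∈ I01, ‖kt t a‖ ≤ Ψ a) (hΨ : Integrable Ψ μ)
    (hg : AEStronglyMeasurable g μ) (hgM : ∀ᵐ a ∂μ, ‖g a‖ ≤ M) :
    ContinuousOn (fun t => ∫ a, kt t a * g a ∂μ) I01 :=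
  continuousOn_of_dominated (bound := fun a => Ψ a * M)
    (fun t ht => (aestronglyMeasurable_of_hasDerivWithinAt
      (uniqueDiffOn_Icc zero_lt_one t ht).accPt hk_meas (h_diff.mono fun a ha => ha t ht)).mul hg)
    (fun t ht => by
      filter_upwards [h_bound, hgM] with a hka hga using norm_mul_le_of_le (hka t ht) hga)
    (hΨ.mul_const M) (h_cont.mono fun a ha => ha.mul continuousOn_const)

end KernelIntegral

theorem continuous_ext01 (u : C(I01, ℝ)) : Continuous (ext01 u) :=
  u.continuous.Icc_extend'

theorem ext01_of_mem (u : C(I01, ℝ)) {t : ℝ} (ht : t ∈ I01) : ext01 u t = u ⟨t, ht⟩ :=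
  IccExtend_of_mem _ _ ht

theorem IsC1.add {p q : E} (hp : IsC1 p) (hq : IsC1 q) : IsC1 (p + q) :=
  fun t => (hp t).add (hq t)

theorem IsC1.const_smul {p : E} (c : ℝ) (hp : IsC1 p) : IsC1 (c • p) :=
  fun t => (hp t).const_mul c

theorem add_mem_coneP {p q : E} (hp : p ∈ coneP) (hq : q ∈ coneP) : p + q ∈ coneP :=
  ⟨hp.1.add hq.1, fun t => ⟨add_nonneg (hp.2 t).1 (hq.2 t).1, add_nonneg (hp.2 t).2 (hq.2 t).2⟩⟩

theorem smul_mem_coneP {p : E} {c : ℝ} (hc : 0 ≤ c) (hp : p ∈ coneP) : c • p ∈ coneP :=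
  ⟨hp.1.const_smul c, fun t => ⟨mul_nonneg hc (hp.2 t).1, mul_nonneg hc (hp.2 t).2⟩⟩

theorem exists_mem_coneP_of_hasDerivWithinAt {A B : ℝ → ℝ}
    (hAB : ∀ t ∈ I01, HasDerivWithinAt A (B t) I01 t) (hB : ContinuousOn B I01)
    (hA₀ : ∀ t ∈ I01, 0 ≤ A t) (hB₀ : ∀ t ∈ I01, 0 ≤ B t) :
    ∃ q ∈ coneP, ∀ t : I01, q.1 t = A t ∧ q.2 t = B t := by
  have hA : ContinuousOn A I01 := fun t ht => (hAB t ht).continuousWithinAt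
  refine ⟨(⟨I01.domRestrict A, hA.domRestrict⟩, ⟨I01.domRestrict B, hB.domRestrict⟩),
    ⟨fun t => ?_, fun t => ⟨hA₀ t t.2, hB₀ t t.2⟩⟩, fun t => ⟨rfl, rfl⟩⟩
  exact (hAB t t.2).congr (fun x hx => ext01_of_mem _ hx) (ext01_of_mem _ t.2)

theorem exists_kernel_integral_mem_coneP {k kt : ℝ → ℝ → ℝ} {Φ Ψ g : ℝ → ℝ}
    (hk_meas : Measurable (Function.uncurry k))
    (hk_nonneg : ∀ t ∈ I01, ∀ s ∈ I01, 0 ≤ k t s)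
    (hΦ : IntegrableOn Φ I01)
    (hkΦ : ∀ᵐ s ∂(volume.restrict I01), ∀ t ∈ I01, k t s ≤ Φ s)
    (hkt : ∀ᵐ s ∂(volume.restrict I01),
      (∀ t ∈ I01, HasDerivWithinAt (fun x => k x s) (kt t s) I01 t) ∧
      ContinuousOn (fun t => kt t s) I01 ∧
      ∀ t ∈ I01, 0 ≤ kt t s ∧ kt t s ≤ Ψ s)
    (hΨ : IntegrableOn Ψ I01) (hg : ContinuousOn g I01) (hg₀ : ∀ s ∈ I01, 0 ≤ g s) :
    ∃ q ∈ coneP, ∀ t : I01,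
      q.1 t = ∫ s in I01, k t s * g s ∧ q.2 t = ∫ s in I01, kt t s * g s := by
  have hI01 : ∀ᵐ s ∂(volume.restrict I01), s ∈ I01 := ae_restrict_mem measurableSet_Icc
  obtain ⟨M, hM⟩ := isCompact_Icc.exists_bound_of_continuousOn hg
  have hgM : ∀ᵐ s ∂(volume.restrict I01), ‖g s‖ ≤ M := hI01.mono hM
  have hg_meas : AEStronglyMeasurable g (volume.restrict I01) :=
    hg.aestronglyMeasurable measurableSet_Icc
  have hk_sections : ∀ t, AEStronglyMeasurable (k t) (volume.restrict I01) :=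
    fun t => (hk_meas.comp measurable_prodMk_left).aestronglyMeasurable
  have hk_int : ∀ t ∈ I01, IntegrableOn (k t) I01 := fun t ht => hΦ.mono' (hk_sections t) <| by
    filter_upwards [hkΦ, hI01] with s hkΦs hs
    rw [Real.norm_of_nonneg (hk_nonneg t ht s hs)]
    exact hkΦs t ht
  have hkt_bound : ∀ᵐ s ∂(volume.restrict I01), ∀ t ∈ I01, ‖kt t s‖ ≤ Ψ s :=
    hkt.mono fun s hs t ht => by rw [Real.norm_of_nonneg (hs.2.2 t ht).1]; exact (hs.2.2 t ht).2
  have h_diff := hkt.mono fun _ hs => hs.1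
  refine exists_mem_coneP_of_hasDerivWithinAt
    (fun t ht => hasDerivWithinAt_kernel_integral hk_int h_diff hkt_bound hΨ hg_meas hgM ht)
    (continuousOn_kernel_integral hk_sections h_diff (hkt.mono fun _ hs => hs.2.1) hkt_bound hΨ
      hg_meas hgM)
    (fun t ht => setIntegral_nonneg measurableSet_Icc fun s hs =>
      mul_nonneg (hk_nonneg t ht s hs) (hg₀ s hs))
    (fun t ht => integral_nonneg_of_ae ?_)
  filter_upwards [hkt, hI01] with s hs hs' using mul_nonneg (hs.2.2 t ht).1 (hg₀ s hs')

theorem continuousOn_superposition {f : ℝ → ℝ → ℝ → ℝ}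
    (hf : ContinuousOn (fun x : ℝ × ℝ × ℝ => f x.1 x.2.1 x.2.2) (I01 ×ˢ Ici (0:ℝ) ×ˢ Ici (0:ℝ)))
    {p : E} (hp : ∀ t : I01, 0 ≤ p.1 t ∧ 0 ≤ p.2 t) :
    ContinuousOn (fun s => f s (ext01 p.1 s) (ext01 p.2 s)) I01 :=
  hf.comp (continuous_id.prodMk ((continuous_ext01 _).prodMk (continuous_ext01 _))).continuousOn
    fun _ hs => ⟨hs, (hp _).1, (hp _).2⟩

theorem integral_I01_eq_intervalIntegral (φ : ℝ → ℝ) :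
    ∫ s in I01, φ s = ∫ s in (0:ℝ)..1, φ s := by
  rw [intervalIntegral.integral_of_le zero_le_one, integral_Icc_eq_integral_Ioc]

theorem T_maps_cone_into_cone_general
    (k kt : ℝ → ℝ → ℝ) (Φ Ψ : ℝ → ℝ) (f : ℝ → ℝ → ℝ → ℝ)
    (γ₁ γ₂ γ₁' γ₂' : ℝ → ℝ) (η₁ η₂ lam : ℝ) (h₁ h₂ : E → ℝ)
    -- (C₁)
    (hk_meas : Measurable (Function.uncurry k))
    (hk_nonneg : ∀ t ∈ I01, ∀ s ∈ I01, 0 ≤ k t s)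
    (hΦ : IntegrableOn Φ I01)
    (hkΦ : ∀ᵐ s ∂(volume.restrict I01), ∀ t ∈ I01, k t s ≤ Φ s)
    -- (C₂)
    (hkt : ∀ᵐ s ∂(volume.restrict I01),
      (∀ t ∈ I01, HasDerivWithinAt (fun x => k x s) (kt t s) I01 t) ∧
      ContinuousOn (fun t => kt t s) I01 ∧
      ∀ t ∈ I01, 0 ≤ kt t s ∧ kt t s ≤ Ψ s)
    (hΨ : IntegrableOn Ψ I01)
    -- (C₃)
    (hf_cont : ContinuousOn (fun x : ℝ × ℝ × ℝ => f x.1 x.2.1 x.2.2)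
      (I01 ×ˢ Ici (0:ℝ) ×ˢ Ici (0:ℝ)))
    (hf_nonneg : ∀ t ∈ I01, ∀ u ∈ Ici (0:ℝ), ∀ v ∈ Ici (0:ℝ), 0 ≤ f t u v)
    -- (C₄)
    (hγ₁ : ∀ t ∈ I01, HasDerivWithinAt γ₁ (γ₁' t) I01 t)
    (hγ₂ : ∀ t ∈ I01, HasDerivWithinAt γ₂ (γ₂' t) I01 t)
    (hγ₁'c : ContinuousOn γ₁' I01) (hγ₂'c : ContinuousOn γ₂' I01)
    (hγ_nonneg : ∀ t ∈ I01, 0 ≤ γ₁ t ∧ 0 ≤ γ₂ t ∧ 0 ≤ γ₁' t ∧ 0 ≤ γ₂' t)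
    -- (C₅)
    (hη₁ : 0 ≤ η₁) (hη₂ : 0 ≤ η₂) (hlam : 0 ≤ lam)
    -- (C₆)
    (hh₁_nonneg : ∀ p ∈ coneP, 0 ≤ h₁ p) (hh₂_nonneg : ∀ p ∈ coneP, 0 ≤ h₂ p) :
    ∀ p ∈ coneP, ∃ q ∈ coneP,
      (∀ t : I01, q.1 t = η₁ * γ₁ (t : ℝ) * h₁ p + η₂ * γ₂ (t : ℝ) * h₂ p +
        lam * ∫ s in (0:ℝ)..1, k (t : ℝ) s * f s (ext01 p.1 s) (ext01 p.2 s)) ∧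
      (∀ t : I01, q.2 t = η₁ * γ₁' (t : ℝ) * h₁ p + η₂ * γ₂' (t : ℝ) * h₂ p +
        lam * ∫ s in (0:ℝ)..1, kt (t : ℝ) s * f s (ext01 p.1 s) (ext01 p.2 s)) := by
  intro p hp
  obtain ⟨Γ₁, hΓ₁, hΓ₁_eq⟩ := exists_mem_coneP_of_hasDerivWithinAt hγ₁ hγ₁'c
    (fun t ht => (hγ_nonneg t ht).1) (fun t ht => (hγ_nonneg t ht).2.2.1)
  obtain ⟨Γ₂, hΓ₂, hΓ₂_eq⟩ := exists_mem_coneP_of_hasDerivWithinAt hγ₂ hγ₂'c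
    (fun t ht => (hγ_nonneg t ht).2.1) (fun t ht => (hγ_nonneg t ht).2.2.2)
  obtain ⟨𝒦, h𝒦, h𝒦_eq⟩ := exists_kernel_integral_mem_coneP hk_meas hk_nonneg hΦ hkΦ hkt hΨ
    (continuousOn_superposition hf_cont hp.2)
    (fun s hs => hf_nonneg s hs _ (hp.2 _).1 _ (hp.2 _).2)
  refine ⟨(η₁ * h₁ p) • Γ₁ + (η₂ * h₂ p) • Γ₂ + lam • 𝒦,
    add_mem_coneP (add_mem_coneP (smul_mem_coneP (mul_nonneg hη₁ (hh₁_nonneg p hp)) hΓ₁)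
      (smul_mem_coneP (mul_nonneg hη₂ (hh₂_nonneg p hp)) hΓ₂)) (smul_mem_coneP hlam h𝒦),
    fun t => ?_, fun t => ?_⟩
  · simp only [Prod.fst_add, Prod.smul_fst, ContinuousMap.add_apply, ContinuousMap.smul_apply,
      smul_eq_mul, (hΓ₁_eq t).1, (hΓ₂_eq t).1, (h𝒦_eq t).1, integral_I01_eq_intervalIntegral]
    ring
  · simp only [Prod.snd_add, Prod.smul_snd, ContinuousMap.add_apply, ContinuousMap.smul_apply,
      smul_eq_mul, (hΓ₁_eq t).2, (hΓ₂_eq t).2, (h𝒦_eq t).2, integral_I01_eq_intervalIntegral]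
    ring

/-- Under (C₁)–(C₆), the operator `T` maps the cone `P` into itself: for `u ∈ P`, `Tu` is a
`C¹[0,1]` function (with derivative given by differentiating under the integral sign) which is
non-negative with non-negative derivative. -/
theorem T_maps_cone_into_cone
    (k kt : ℝ → ℝ → ℝ) (Φ Ψ : ℝ → ℝ) (f : ℝ → ℝ → ℝ → ℝ)
    (γ₁ γ₂ γ₁' γ₂' : ℝ → ℝ) (η₁ η₂ lam : ℝ) (h₁ h₂ : E → ℝ)
    -- (C₁)
    (hk_meas : Measurable (Function.uncurry k))
    (hk_cont : ∀ᵐ s ∂(volume.restrict I01), ContinuousOn (fun t => k t s) I01)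
    (hk_nonneg : ∀ t ∈ I01, ∀ s ∈ I01, 0 ≤ k t s)
    (hΦ : IntegrableOn Φ I01)
    (hkΦ : ∀ᵐ s ∂(volume.restrict I01), ∀ t ∈ I01, k t s ≤ Φ s)
    -- (C₂)
    (hkt : ∀ᵐ s ∂(volume.restrict I01),
      (∀ t ∈ I01, HasDerivWithinAt (fun x => k x s) (kt t s) I01 t) ∧
      ContinuousOn (fun t => kt t s) I01 ∧
      ∀ t ∈ I01, 0 ≤ kt t s ∧ kt t s ≤ Ψ s)
    (hΨ : IntegrableOn Ψ I01)
    -- (C₃)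
    (hf_cont : ContinuousOn (fun x : ℝ × ℝ × ℝ => f x.1 x.2.1 x.2.2)
      (I01 ×ˢ Ici (0:ℝ) ×ˢ Ici (0:ℝ)))
    (hf_nonneg : ∀ t ∈ I01, ∀ u ∈ Ici (0:ℝ), ∀ v ∈ Ici (0:ℝ), 0 ≤ f t u v)
    -- (C₄)
    (hγ₁ : ∀ t ∈ I01, HasDerivWithinAt γ₁ (γ₁' t) I01 t)
    (hγ₂ : ∀ t ∈ I01, HasDerivWithinAt γ₂ (γ₂' t) I01 t)
    (hγ₁'c : ContinuousOn γ₁' I01) (hγ₂'c : ContinuousOn γ₂' I01)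
    (hγ_nonneg : ∀ t ∈ I01, 0 ≤ γ₁ t ∧ 0 ≤ γ₂ t ∧ 0 ≤ γ₁' t ∧ 0 ≤ γ₂' t)
    -- (C₅)
    (hη₁ : 0 ≤ η₁) (hη₂ : 0 ≤ η₂) (hlam : 0 ≤ lam)
    -- (C₆)
    (hh₁_nonneg : ∀ p ∈ coneP, 0 ≤ h₁ p) (hh₂_nonneg : ∀ p ∈ coneP, 0 ≤ h₂ p)
    (hh₁_cont : ContinuousOn h₁ coneP) (hh₂_cont : ContinuousOn h₂ coneP)
    (hh₁_bdd : ∀ B ⊆ coneP, IsBounded B → IsBounded (h₁ '' B))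
    (hh₂_bdd : ∀ B ⊆ coneP, IsBounded B → IsBounded (h₂ '' B)) :
    ∀ p ∈ coneP, ∃ q ∈ coneP,
      (∀ t : I01, q.1 t = η₁ * γ₁ (t : ℝ) * h₁ p + η₂ * γ₂ (t : ℝ) * h₂ p +
        lam * ∫ s in (0:ℝ)..1, k (t : ℝ) s * f s (ext01 p.1 s) (ext01 p.2 s)) ∧
      (∀ t : I01, q.2 t = η₁ * γ₁' (t : ℝ) * h₁ p + η₂ * γ₂' (t : ℝ) * h₂ p +
        lam * ∫ s in (0:ℝ)..1, kt (t : ℝ) s * f s (ext01 p.1 s) (ext01 p.2 s)) :=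
  T_maps_cone_into_cone_general k kt Φ Ψ f γ₁ γ₂ γ₁' γ₂' η₁ η₂ lam h₁ h₂ hk_meas hk_nonneg hΦ hkΦ
    hkt hΨ hf_cont hf_nonneg hγ₁ hγ₂ hγ₁'c hγ₂'c hγ_nonneg hη₁ hη₂ hlam hh₁_nonneg hh₂_nonneg
end
end

section
/- Under hypotheses (C1)–(C6), let r > 0 satisfy λ·f̲_r·min{K, K*} ≥ r, and assume T has no fixed point u ∈ P with ‖u‖ = r. Let g ∈ P be the function g(t) := t. Then for every u ∈ P with ‖u‖ = r and every σ > 0 one has u ≠ T u + σ·g, where Tu(t) := η1 γ1(t) h1[u] + η2 γ2(t) h2[u] + λ ∫₀¹ k(t,s) f(s, u(s), u'(s)) ds. -/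
open MeasureTheory Set Bornology

noncomputable section

/-- `f̄_ρ = max_{[0,1]×[0,ρ]²} f`. -/
def fSup (f : ℝ → ℝ → ℝ → ℝ) (ρ : ℝ) : ℝ :=
  ⨆ x : I01 × Icc (0:ℝ) ρ × Icc (0:ℝ) ρ, f (x.1 : ℝ) (x.2.1 : ℝ) (x.2.2 : ℝ)

/-- `f̲_ρ = min_{[0,1]×[0,ρ]²} f`. -/
def fInf (f : ℝ → ℝ → ℝ → ℝ) (ρ : ℝ) : ℝ :=
  ⨅ x : I01 × Icc (0:ℝ) ρ × Icc (0:ℝ) ρ, f (x.1 : ℝ) (x.2.1 : ℝ) (x.2.2 : ℝ)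

/-- `H_{i,ρ} = sup {h_i[u] : u ∈ ∂P_ρ}`. -/
def Hsup (h : E → ℝ) (ρ : ℝ) : ℝ := sSup (h '' {p ∈ coneP | ‖p‖ = ρ})

/-- `K* = sup_{t∈[0,1]} ∫₀¹ ∂ₜk(t,s) ds`. -/
def Kstar (kt : ℝ → ℝ → ℝ) : ℝ := ⨆ t : I01, ∫ s in (0:ℝ)..1, kt (t : ℝ) s

/-- `‖g‖_∞` for a raw function (sup over `[0,1]`). -/
def supNorm (g : ℝ → ℝ) : ℝ := ⨆ t : I01, |g (t : ℝ)|

/-- The second part of the proof of Theorem 2.2: under the index condition at `r`, if `T` has no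
fixed point on `∂P_r` then, with `g(t) := t`, one has `u ≠ Tu + σ·g` for all `u ∈ ∂P_r` and all
`σ > 0`. -/
theorem no_translate_fixed_point_on_boundary
    (k kt : ℝ → ℝ → ℝ) (Φ Ψ : ℝ → ℝ) (f : ℝ → ℝ → ℝ → ℝ)
    (γ₁ γ₂ γ₁' γ₂' : ℝ → ℝ) (η₁ η₂ lam : ℝ) (h₁ h₂ : E → ℝ)
    -- (C₁)
    (hk_meas : Measurable (Function.uncurry k))
    (hk_cont : ∀ᵐ s ∂(volume.restrict I01), ContinuousOn (fun t => k t s) I01)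
    (hk_nonneg : ∀ t ∈ I01, ∀ s ∈ I01, 0 ≤ k t s)
    (hΦ : IntegrableOn Φ I01)
    (hkΦ : ∀ᵐ s ∂(volume.restrict I01), ∀ t ∈ I01, k t s ≤ Φ s)
    -- (C₂)
    (hkt : ∀ᵐ s ∂(volume.restrict I01),
      (∀ t ∈ I01, HasDerivWithinAt (fun x => k x s) (kt t s) I01 t) ∧
      ContinuousOn (fun t => kt t s) I01 ∧
      ∀ t ∈ I01, 0 ≤ kt t s ∧ kt t s ≤ Ψ s)
    (hΨ : IntegrableOn Ψ I01)
    -- (C₃)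
    (hf_cont : ContinuousOn (fun x : ℝ × ℝ × ℝ => f x.1 x.2.1 x.2.2)
      (I01 ×ˢ Ici (0:ℝ) ×ˢ Ici (0:ℝ)))
    (hf_nonneg : ∀ t ∈ I01, ∀ u ∈ Ici (0:ℝ), ∀ v ∈ Ici (0:ℝ), 0 ≤ f t u v)
    -- (C₄)
    (hγ₁ : ∀ t ∈ I01, HasDerivWithinAt γ₁ (γ₁' t) I01 t)
    (hγ₂ : ∀ t ∈ I01, HasDerivWithinAt γ₂ (γ₂' t) I01 t)
    (hγ₁'c : ContinuousOn γ₁' I01) (hγ₂'c : ContinuousOn γ₂' I01)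
    (hγ_nonneg : ∀ t ∈ I01, 0 ≤ γ₁ t ∧ 0 ≤ γ₂ t ∧ 0 ≤ γ₁' t ∧ 0 ≤ γ₂' t)
    -- (C₅)
    (hη₁ : 0 ≤ η₁) (hη₂ : 0 ≤ η₂) (hlam : 0 ≤ lam)
    -- (C₆)
    (hh₁_nonneg : ∀ p ∈ coneP, 0 ≤ h₁ p) (hh₂_nonneg : ∀ p ∈ coneP, 0 ≤ h₂ p)
    (hh₁_cont : ContinuousOn h₁ coneP) (hh₂_cont : ContinuousOn h₂ coneP)
    (hh₁_bdd : ∀ B ⊆ coneP, IsBounded B → IsBounded (h₁ '' B))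
    (hh₂_bdd : ∀ B ⊆ coneP, IsBounded B → IsBounded (h₂ '' B))
    (r : ℝ) (hr : 0 < r)
    (hidx0 : r ≤ lam * fInf f r * min (Kconst k) (Kstar kt))
    (hnofix : ¬ ∃ p ∈ coneP, ‖p‖ = r ∧
      ∀ t : I01, p.1 t = η₁ * γ₁ (t : ℝ) * h₁ p + η₂ * γ₂ (t : ℝ) * h₂ p +
        lam * ∫ s in (0:ℝ)..1, k (t : ℝ) s * f s (ext01 p.1 s) (ext01 p.2 s)) :
    ∀ p ∈ coneP, ‖p‖ = r → ∀ σ : ℝ, 0 < σ →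
      ¬ ∀ t : I01, p.1 t = η₁ * γ₁ (t : ℝ) * h₁ p + η₂ * γ₂ (t : ℝ) * h₂ p +
        (lam * ∫ s in (0:ℝ)..1, k (t : ℝ) s * f s (ext01 p.1 s) (ext01 p.2 s)) + σ * (t : ℝ) := by
  intro p hp hpr σ hσ heq
  -- basic facts about p
  obtain ⟨hpC1, hpnn⟩ := hp
  have hu_cont : Continuous (ext01 p.1) := continuous_IccExtend_iff.2 p.1.continuous
  have hv_cont : Continuous (ext01 p.2) := continuous_IccExtend_iff.2 p.2.continuous
  have h1mem : (1:ℝ) ∈ I01 := ⟨zero_le_one, le_refl 1⟩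
  -- values of p lie in [0, r]
  have hu_mem : ∀ s : I01, p.1 s ∈ Icc (0:ℝ) r := by
    intro s
    refine ⟨(hpnn s).1, ?_⟩
    calc p.1 s ≤ |p.1 s| := le_abs_self _
    _ ≤ ‖p.1‖ := p.1.norm_coe_le_norm s
    _ ≤ ‖p‖ := norm_fst_le p
    _ = r := hpr
  have hv_mem : ∀ s : I01, p.2 s ∈ Icc (0:ℝ) r := by
    intro s
    refine ⟨(hpnn s).2, ?_⟩
    calc p.2 s ≤ |p.2 s| := le_abs_self _
    _ ≤ ‖p.2‖ := p.2.norm_coe_le_norm s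
    _ ≤ ‖p‖ := norm_snd_le p
    _ = r := hpr
  haveI : Nonempty (↥I01 × ↥(Icc (0:ℝ) r) × ↥(Icc (0:ℝ) r)) :=
    ⟨⟨⟨0, ⟨le_refl 0, zero_le_one⟩⟩, ⟨0, ⟨le_refl 0, hr.le⟩⟩, ⟨0, ⟨le_refl 0, hr.le⟩⟩⟩⟩
  -- fInf is nonneg and a lower bound
  have hbdd : BddBelow (Set.range fun x : I01 × Icc (0:ℝ) r × Icc (0:ℝ) r =>
      f (x.1 : ℝ) (x.2.1 : ℝ) (x.2.2 : ℝ)) := by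
    refine ⟨0, ?_⟩
    rintro y ⟨x, rfl⟩
    exact hf_nonneg _ x.1.2 _ x.2.1.2.1 _ x.2.2.2.1
  have hfInf_nonneg : 0 ≤ fInf f r :=
    le_ciInf fun x => hf_nonneg _ x.1.2 _ x.2.1.2.1 _ x.2.2.2.1
  have hfInf_le : ∀ s : ℝ, s ∈ I01 →
      fInf f r ≤ f s (ext01 p.1 s) (ext01 p.2 s) := by
    intro s hs
    have e1 : ext01 p.1 s = p.1 ⟨s, hs⟩ := Set.IccExtend_of_mem _ _ hs
    have e2 : ext01 p.2 s = p.2 ⟨s, hs⟩ := Set.IccExtend_of_mem _ _ hs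
    rw [e1, e2]
    exact ciInf_le hbdd ⟨⟨s, hs⟩, ⟨p.1 ⟨s, hs⟩, hu_mem _⟩, ⟨p.2 ⟨s, hs⟩, hv_mem _⟩⟩
  -- the nonlinearity along p is continuous on I01
  set g : ℝ → ℝ := fun s => f s (ext01 p.1 s) (ext01 p.2 s) with hg
  have hg_cont : ContinuousOn g I01 := by
    have hmap : Set.MapsTo (fun s : ℝ => (s, ext01 p.1 s, ext01 p.2 s)) I01
        (I01 ×ˢ Ici (0:ℝ) ×ˢ Ici (0:ℝ)) := by
      intro s hs
      have e1 : ext01 p.1 s = p.1 ⟨s, hs⟩ := Set.IccExtend_of_mem _ _ hs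
      have e2 : ext01 p.2 s = p.2 ⟨s, hs⟩ := Set.IccExtend_of_mem _ _ hs
      refine ⟨hs, ?_, ?_⟩
      · show (0:ℝ) ≤ ext01 p.1 s
        rw [e1]; exact (hpnn _).1
      · show (0:ℝ) ≤ ext01 p.2 s
        rw [e2]; exact (hpnn _).2
    exact hf_cont.comp ((continuous_id.prodMk (hu_cont.prodMk hv_cont)).continuousOn) hmap
  obtain ⟨M, hM⟩ := (isCompact_Icc).exists_bound_of_continuousOn hg_cont
  -- integrability facts
  have hk1_meas : Measurable (fun s => k 1 s) :=
    hk_meas.comp (measurable_const.prodMk measurable_id)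
  have hs_ae : ∀ᵐ s ∂(volume.restrict I01), s ∈ I01 :=
    ae_restrict_mem measurableSet_Icc
  have hk1_int : IntegrableOn (fun s => k 1 s) I01 := by
    refine Integrable.mono' hΦ hk1_meas.aestronglyMeasurable ?_
    filter_upwards [hkΦ, hs_ae] with s hks hs
    rw [Real.norm_eq_abs, abs_of_nonneg (hk_nonneg 1 h1mem s hs)]
    exact hks 1 h1mem
  have hg_aesm : AEStronglyMeasurable g (volume.restrict I01) :=
    hg_cont.aestronglyMeasurable measurableSet_Icc
  have hprod_int : IntegrableOn (fun s => k 1 s * g s) I01 := by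
    refine Integrable.mono' (hΦ.mul_const M) (hk1_meas.aestronglyMeasurable.mul hg_aesm) ?_
    filter_upwards [hkΦ, hs_ae] with s hks hs
    have hk0 : 0 ≤ k 1 s := hk_nonneg 1 h1mem s hs
    have hΦ0 : 0 ≤ Φ s := hk0.trans (hks 1 h1mem)
    calc ‖k 1 s * g s‖ = k 1 s * ‖g s‖ := by
          rw [norm_mul, Real.norm_eq_abs (k 1 s), abs_of_nonneg hk0]
    _ ≤ Φ s * M := mul_le_mul (hks 1 h1mem) (hM s hs) (norm_nonneg _) hΦ0
  have hk1_ii : IntervalIntegrable (fun s => k 1 s) volume 0 1 := by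
    rw [intervalIntegrable_iff_integrableOn_Icc_of_le zero_le_one]; exact hk1_int
  have hprod_ii : IntervalIntegrable (fun s => k 1 s * g s) volume 0 1 := by
    rw [intervalIntegrable_iff_integrableOn_Icc_of_le zero_le_one]; exact hprod_int
  -- the key integral lower bound
  have hint : Kconst k * fInf f r ≤ ∫ s in (0:ℝ)..1, k 1 s * g s := by
    have h2 : ∫ s in (0:ℝ)..1, k 1 s * fInf f r ≤ ∫ s in (0:ℝ)..1, k 1 s * g s := by
      refine intervalIntegral.integral_mono_on zero_le_one (hk1_ii.mul_const _) hprod_ii ?_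
      intro s hs
      exact mul_le_mul_of_nonneg_left (hfInf_le s hs) (hk_nonneg 1 h1mem s hs)
    rwa [intervalIntegral.integral_mul_const] at h2
  -- fInf * K lower bounds r
  have hrK : r ≤ lam * (Kconst k * fInf f r) := by
    have h1 : lam * fInf f r * min (Kconst k) (Kstar kt) ≤ lam * fInf f r * Kconst k :=
      mul_le_mul_of_nonneg_left (min_le_left _ _) (mul_nonneg hlam hfInf_nonneg)
    calc r ≤ lam * fInf f r * min (Kconst k) (Kstar kt) := hidx0
    _ ≤ lam * fInf f r * Kconst k := h1
    _ = lam * (Kconst k * fInf f r) := by ring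
  -- evaluate the equation at t = 1
  have heq1 := heq ⟨1, h1mem⟩
  have hγ := hγ_nonneg 1 h1mem
  have hA : 0 ≤ η₁ * γ₁ 1 * h₁ p := mul_nonneg (mul_nonneg hη₁ hγ.1) (hh₁_nonneg p ⟨hpC1, hpnn⟩)
  have hB : 0 ≤ η₂ * γ₂ 1 * h₂ p :=
    mul_nonneg (mul_nonneg hη₂ hγ.2.1) (hh₂_nonneg p ⟨hpC1, hpnn⟩)
  have hC : lam * (Kconst k * fInf f r) ≤
      lam * ∫ s in (0:ℝ)..1, k 1 s * g s := mul_le_mul_of_nonneg_left hint hlam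
  have hle : p.1 ⟨1, h1mem⟩ ≤ r := (hu_mem ⟨1, h1mem⟩).2
  rw [heq1] at hle
  simp only [hg] at hC ⊢
  have := hrK.trans hC
  push_cast at hle
  nlinarith
end
end

section
/- Let f(t,u,v) := e^{t(u+v)}, h1[u] := u(1/4) + (u'(3/4))², h2[u] := ∫₀¹ (u(s)³ + u'(s)) ds, and suppose λ, η1, η2 ≥ 0 satisfy max{ λ·e²/2 + 2η1 + 2η2, λ·e² + 2η2 } ≤ 1 and λ ≥ 1/10. Then the boundary value problem u''(t) + λ e^{t(u(t)+u'(t))} = 0, u(0) = η1 h1[u], u'(1) = η2 h2[u] has at least one solution u that is non-negative and non-decreasing on [0,1] and satisfies 1/20 ≤ ‖u‖ ≤ 1, where ‖u‖ := max{‖u‖_∞, ‖u'‖_∞}. In particular this holds for λ = 1/10, η1 = 1/11, η2 = 1/12. -/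
/-!
With `v = u'` the problem is the fixed-point equation `(u, v) = op (u, v)` of the integrated
first-order system. Under the parameter bounds, `op` is monotone on pairs with values in `[0,1]`
and maps this box into itself (the two bounds are exactly those for `u` and for `v`), so its
iterates from `0` increase to a pointwise limit. Dominated convergence makes the limit a fixed
point, and a bounded measurable fixed point is `C¹` by the fundamental theorem of calculus.
The lower bound comes from `u'(0) ≥ λ ∫₀¹ e^{s(u+u')} ds ≥ λ ≥ 1/10`.
-/

open MeasureTheory Set Bornology

noncomputable section

open Filter Topology

section IntervalIntegral

variable {G : Type*} [NormedAddCommGroup G] [NormedSpace ℝ G]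

theorem tendsto_intervalIntegral_of_norm_le_const {ι : Type*} {l : Filter ι}
    [l.IsCountablyGenerated] {F : ι → ℝ → G} {f : ℝ → G} {a b C : ℝ}
    (hF : ∀ i, ContinuousOn (F i) (uIcc a b)) (hbound : ∀ i, ∀ x ∈ uIcc a b, ‖F i x‖ ≤ C)
    (hlim : ∀ x ∈ uIcc a b, Tendsto (F · x) l (𝓝 (f x))) :
    Tendsto (fun i => ∫ x in a..b, F i x) l (𝓝 (∫ x in a..b, f x)) :=
  intervalIntegral.tendsto_integral_filter_of_dominated_convergence (fun _ => C)
    (.of_forall fun i => ((hF i).mono uIoc_subset_uIcc).aestronglyMeasurable measurableSet_uIoc)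
    (.of_forall fun i => ae_of_all _ fun x hx => hbound i x (uIoc_subset_uIcc hx))
    intervalIntegrable_const
    (ae_of_all _ fun x hx => hlim x (uIoc_subset_uIcc hx))

variable [CompleteSpace G] {f : ℝ → G} {a b t : ℝ}

theorem hasDerivWithinAt_integral_Icc_right (hf : ContinuousOn f (Icc a b)) (ht : t ∈ Icc a b) :
    HasDerivWithinAt (fun x => ∫ s in a..x, f s) (f t) (Icc a b) t :=
  have : Fact (t ∈ Icc a b) := ⟨ht⟩
  intervalIntegral.integral_hasDerivWithinAt_right
    ((hf.mono (Icc_subset_Icc le_rfl ht.2)).intervalIntegrable_of_Icc ht.1)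
    (hf.stronglyMeasurableAtFilter_nhdsWithin measurableSet_Icc t) (hf t ht)

theorem hasDerivWithinAt_integral_Icc_left (hf : ContinuousOn f (Icc a b)) (ht : t ∈ Icc a b) :
    HasDerivWithinAt (fun x => ∫ s in x..b, f s) (-f t) (Icc a b) t :=
  have : Fact (t ∈ Icc a b) := ⟨ht⟩
  intervalIntegral.integral_hasDerivWithinAt_left
    ((hf.mono (Icc_subset_Icc ht.1 le_rfl)).intervalIntegrable_of_Icc ht.2)
    (hf.stronglyMeasurableAtFilter_nhdsWithin measurableSet_Icc t) (hf t ht)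

end IntervalIntegral

namespace ExpBVP

theorem uIcc_zero_one : uIcc (0:ℝ) 1 = I01 := uIcc_of_le zero_le_one

abbrev FunPair := (ℝ → ℝ) × (ℝ → ℝ)

def nonlin (p : FunPair) (s : ℝ) : ℝ := Real.exp (s * (p.1 s + p.2 s))

def h₁ (p : FunPair) : ℝ := p.1 (1/4) + p.2 (3/4) ^ 2

def h₂ (p : FunPair) : ℝ := ∫ s in (0:ℝ)..1, (p.1 s ^ 3 + p.2 s)

/- `opU` is the operator `T` of the paper, since `∫₀ᵗ ∫ₛ¹ g = ∫₀¹ min(t,s) g(s) ds`. -/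
def opV (η₂ lam : ℝ) (p : FunPair) (t : ℝ) : ℝ :=
  η₂ * h₂ p + lam * ∫ s in t..1, nonlin p s

def opU (η₁ η₂ lam : ℝ) (p : FunPair) (t : ℝ) : ℝ :=
  η₁ * h₁ p + ∫ s in (0:ℝ)..t, opV η₂ lam p s

def op (η₁ η₂ lam : ℝ) (p : FunPair) : FunPair := (opU η₁ η₂ lam p, opV η₂ lam p)

def InBox (p : FunPair) : Prop := ∀ t ∈ I01, p.1 t ∈ I01 ∧ p.2 t ∈ I01

def LeOn (p q : FunPair) : Prop := ∀ t ∈ I01, p.1 t ≤ q.1 t ∧ p.2 t ≤ q.2 t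

structure AdmissibleParams (η₁ η₂ lam : ℝ) : Prop where
  η₁_nonneg : 0 ≤ η₁
  η₂_nonneg : 0 ≤ η₂
  lam_nonneg : 0 ≤ lam
  bound_fst : lam * (Real.exp 2 / 2) + 2 * η₁ + 2 * η₂ ≤ 1
  bound_snd : lam * Real.exp 2 + 2 * η₂ ≤ 1

variable {η₁ η₂ lam s t : ℝ} {p q : FunPair}

section Nonlin

theorem continuous_nonlin (hp₁ : Continuous p.1) (hp₂ : Continuous p.2) :
    Continuous (nonlin p) := by
  unfold nonlin; fun_prop

theorem continuousOn_nonlin (hp₁ : ContinuousOn p.1 I01) (hp₂ : ContinuousOn p.2 I01) :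
    ContinuousOn (nonlin p) I01 := by
  unfold nonlin; fun_prop

theorem measurable_nonlin (hp₁ : Measurable p.1) (hp₂ : Measurable p.2) :
    Measurable (nonlin p) := by
  unfold nonlin; fun_prop

theorem nonlin_pos : 0 < nonlin p s := Real.exp_pos _

theorem one_le_nonlin (hp : InBox p) (hs : s ∈ I01) : 1 ≤ nonlin p s :=
  Real.one_le_exp (mul_nonneg hs.1 (add_nonneg (hp s hs).1.1 (hp s hs).2.1))

theorem nonlin_le_exp_two (hp : InBox p) (hs : s ∈ I01) : nonlin p s ≤ Real.exp 2 := by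
  obtain ⟨⟨-, hu⟩, -, hv⟩ := hp s hs
  exact Real.exp_le_exp.2 (by nlinarith [hs.1, hs.2])

theorem nonlin_le_nonlin (hpq : LeOn p q) (hs : s ∈ I01) : nonlin p s ≤ nonlin q s :=
  Real.exp_le_exp.2 (mul_le_mul_of_nonneg_left (add_le_add (hpq s hs).1 (hpq s hs).2) hs.1)

theorem norm_nonlin_le_exp_two (hp : InBox p) (hs : s ∈ I01) : ‖nonlin p s‖ ≤ Real.exp 2 := by
  rw [Real.norm_of_nonneg nonlin_pos.le]
  exact nonlin_le_exp_two hp hs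

theorem integral_nonlin_le (hp : InBox p) (ht : t ∈ I01) :
    ∫ s in t..1, nonlin p s ≤ Real.exp 2 * (1 - t) := by
  refine (Real.le_norm_self _).trans ((intervalIntegral.norm_integral_le_of_norm_le_const
    fun s hs => norm_nonlin_le_exp_two hp ?_).trans ?_)
  · rw [uIoc_of_le ht.2] at hs
    exact ⟨ht.1.trans hs.1.le, hs.2⟩
  · rw [abs_of_nonneg (by linarith [ht.2])]

theorem integral_nonlin_nonneg (ht : t ∈ I01) : 0 ≤ ∫ s in t..1, nonlin p s :=
  intervalIntegral.integral_nonneg ht.2 fun _ _ => nonlin_pos.le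

theorem one_le_integral_nonlin (hp : InBox p) (hG : IntervalIntegrable (nonlin p) volume 0 1) :
    1 ≤ ∫ s in (0:ℝ)..1, nonlin p s := by
  simpa using intervalIntegral.integral_mono_on zero_le_one intervalIntegrable_const hG
    fun s hs => one_le_nonlin hp hs

end Nonlin

section Functionals

theorem h₁_nonneg (hp : InBox p) : 0 ≤ h₁ p :=
  add_nonneg (hp _ (by norm_num)).1.1 (sq_nonneg _)

theorem h₁_le_two (hp : InBox p) : h₁ p ≤ 2 := by
  obtain ⟨⟨-, hu⟩, -⟩ := hp (1/4) (by norm_num)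
  obtain ⟨-, hv₀, hv₁⟩ := hp (3/4) (by norm_num)
  unfold h₁; nlinarith

theorem h₁_mono (hp : InBox p) (hpq : LeOn p q) : h₁ p ≤ h₁ q :=
  add_le_add (hpq _ (by norm_num)).1
    (pow_le_pow_left₀ (hp _ (by norm_num)).2.1 (hpq _ (by norm_num)).2 2)

theorem h₂_nonneg (hp : InBox p) : 0 ≤ h₂ p :=
  intervalIntegral.integral_nonneg zero_le_one fun s hs =>
    add_nonneg (pow_nonneg (hp s hs).1.1 3) (hp s hs).2.1

theorem norm_h₂_integrand_le_two (hp : InBox p) (hs : s ∈ I01) : ‖p.1 s ^ 3 + p.2 s‖ ≤ 2 := by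
  obtain ⟨⟨hu₀, hu₁⟩, hv₀, hv₁⟩ := hp s hs
  rw [Real.norm_of_nonneg (by positivity)]
  linarith [pow_le_one₀ hu₀ hu₁ (n := 3)]

theorem h₂_le_two (hp : InBox p) : h₂ p ≤ 2 := by
  refine (Real.le_norm_self _).trans ((intervalIntegral.norm_integral_le_of_norm_le_const
    fun s hs => norm_h₂_integrand_le_two hp (Ioc_subset_Icc_self ?_)).trans (by simp))
  rwa [uIoc_of_le zero_le_one] at hs

theorem h₂_mono (hp : InBox p) (hpq : LeOn p q) (hp₁ : Continuous p.1) (hp₂ : Continuous p.2)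
    (hq₁ : Continuous q.1) (hq₂ : Continuous q.2) : h₂ p ≤ h₂ q :=
  intervalIntegral.integral_mono_on zero_le_one
    (((hp₁.pow 3).add hp₂).intervalIntegrable 0 1) (((hq₁.pow 3).add hq₂).intervalIntegrable 0 1)
    fun s hs => add_le_add (pow_le_pow_left₀ (hp s hs).1.1 (hpq s hs).1 3) (hpq s hs).2

end Functionals

section Operator

theorem opV_nonneg (hη₂ : 0 ≤ η₂) (hlam : 0 ≤ lam) (hp : InBox p) (ht : t ∈ I01) :
    0 ≤ opV η₂ lam p t :=
  add_nonneg (mul_nonneg hη₂ (h₂_nonneg hp)) (mul_nonneg hlam (integral_nonlin_nonneg ht))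

theorem opV_le (hη₂ : 0 ≤ η₂) (hlam : 0 ≤ lam) (hp : InBox p) (ht : t ∈ I01) :
    opV η₂ lam p t ≤ 2 * η₂ + lam * Real.exp 2 * (1 - t) := by
  have := mul_le_mul_of_nonneg_left (h₂_le_two hp) hη₂
  have := mul_le_mul_of_nonneg_left (integral_nonlin_le hp ht) hlam
  unfold opV; linarith

theorem lam_le_opV_zero (hη₂ : 0 ≤ η₂) (hlam : 0 ≤ lam) (hp : InBox p)
    (hG : IntervalIntegrable (nonlin p) volume 0 1) : lam ≤ opV η₂ lam p 0 := by
  have := mul_le_mul_of_nonneg_left (one_le_integral_nonlin hp hG) hlam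
  have := mul_nonneg hη₂ (h₂_nonneg hp)
  unfold opV; linarith

theorem continuous_opV (hp₁ : Continuous p.1) (hp₂ : Continuous p.2) :
    Continuous (opV η₂ lam p) := by
  have hI : Continuous fun t => ∫ s in t..1, nonlin p s := by
    simp_rw [intervalIntegral.integral_symm 1]
    exact (intervalIntegral.continuous_primitive
      (continuous_nonlin hp₁ hp₂).intervalIntegrable 1).neg
  exact continuous_const.add (continuous_const.mul hI)

theorem continuous_opU (hp₁ : Continuous p.1) (hp₂ : Continuous p.2) :
    Continuous (opU η₁ η₂ lam p) :=
  continuous_const.add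
    (intervalIntegral.continuous_primitive (continuous_opV hp₁ hp₂).intervalIntegrable 0)

theorem opU_nonneg (hη₁ : 0 ≤ η₁) (hη₂ : 0 ≤ η₂) (hlam : 0 ≤ lam) (hp : InBox p)
    (ht : t ∈ I01) : 0 ≤ opU η₁ η₂ lam p t :=
  add_nonneg (mul_nonneg hη₁ (h₁_nonneg hp)) (intervalIntegral.integral_nonneg ht.1
    fun _ hs => opV_nonneg hη₂ hlam hp ⟨hs.1, hs.2.trans ht.2⟩)

theorem opU_le (hη₁ : 0 ≤ η₁) (hη₂ : 0 ≤ η₂) (hlam : 0 ≤ lam) (hp : InBox p)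
    (hp₁ : Continuous p.1) (hp₂ : Continuous p.2) (ht : t ∈ I01) :
    opU η₁ η₂ lam p t ≤ 2 * η₁ + 2 * η₂ + lam * (Real.exp 2 / 2) := by
  have hV : ∫ s in (0:ℝ)..t, opV η₂ lam p s
      ≤ ∫ s in (0:ℝ)..t, (2 * η₂ + lam * Real.exp 2 * (1 - s)) :=
    intervalIntegral.integral_mono_on ht.1 ((continuous_opV hp₁ hp₂).intervalIntegrable _ _)
      (by apply Continuous.intervalIntegrable; fun_prop)
      fun _ hs => opV_le hη₂ hlam hp ⟨hs.1, hs.2.trans ht.2⟩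
  have hbound : ∫ s in (0:ℝ)..t, (2 * η₂ + lam * Real.exp 2 * (1 - s))
      = 2 * η₂ * t + lam * Real.exp 2 * (t - t ^ 2 / 2) := by
    rw [intervalIntegral.integral_add intervalIntegrable_const
      (by apply Continuous.intervalIntegrable; fun_prop)]
    simp only [intervalIntegral.integral_const, intervalIntegral.integral_const_mul,
      intervalIntegral.integral_comp_sub_left (fun x => x), integral_id, smul_eq_mul, sub_zero,
      one_pow]
    ring
  have := mul_le_mul_of_nonneg_left (h₁_le_two hp) hη₁
  have := mul_le_mul_of_nonneg_left ht.2 hη₂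
  have := mul_nonneg (mul_nonneg hlam (Real.exp_pos 2).le) (sq_nonneg (1 - t))
  unfold opU
  nlinarith

theorem opV_mono (hη₂ : 0 ≤ η₂) (hlam : 0 ≤ lam) (hp : InBox p) (hpq : LeOn p q)
    (hp₁ : Continuous p.1) (hp₂ : Continuous p.2) (hq₁ : Continuous q.1) (hq₂ : Continuous q.2)
    (ht : t ∈ I01) : opV η₂ lam p t ≤ opV η₂ lam q t := by
  have hI : ∫ s in t..1, nonlin p s ≤ ∫ s in t..1, nonlin q s :=
    intervalIntegral.integral_mono_on ht.2 ((continuous_nonlin hp₁ hp₂).intervalIntegrable _ _)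
      ((continuous_nonlin hq₁ hq₂).intervalIntegrable _ _)
      fun _ hs => nonlin_le_nonlin hpq ⟨ht.1.trans hs.1, hs.2⟩
  exact add_le_add (mul_le_mul_of_nonneg_left (h₂_mono hp hpq hp₁ hp₂ hq₁ hq₂) hη₂)
    (mul_le_mul_of_nonneg_left hI hlam)

theorem opU_mono (hη₁ : 0 ≤ η₁) (hη₂ : 0 ≤ η₂) (hlam : 0 ≤ lam) (hp : InBox p) (hpq : LeOn p q)
    (hp₁ : Continuous p.1) (hp₂ : Continuous p.2) (hq₁ : Continuous q.1) (hq₂ : Continuous q.2)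
    (ht : t ∈ I01) : opU η₁ η₂ lam p t ≤ opU η₁ η₂ lam q t :=
  add_le_add (mul_le_mul_of_nonneg_left (h₁_mono hp hpq) hη₁)
    (intervalIntegral.integral_mono_on ht.1 ((continuous_opV hp₁ hp₂).intervalIntegrable _ _)
      ((continuous_opV hq₁ hq₂).intervalIntegrable _ _)
      fun _ hs => opV_mono hη₂ hlam hp hpq hp₁ hp₂ hq₁ hq₂ ⟨hs.1, hs.2.trans ht.2⟩)

theorem op_inBox (hP : AdmissibleParams η₁ η₂ lam) (hp : InBox p)
    (hp₁ : Continuous p.1) (hp₂ : Continuous p.2) : InBox (op η₁ η₂ lam p) := by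
  intro t ht
  have hU := opU_le hP.η₁_nonneg hP.η₂_nonneg hP.lam_nonneg hp hp₁ hp₂ ht
  have hV := opV_le (η₂ := η₂) (lam := lam) hP.η₂_nonneg hP.lam_nonneg hp ht
  have := mul_nonneg (mul_nonneg hP.lam_nonneg (Real.exp_pos 2).le) ht.1
  exact ⟨⟨opU_nonneg hP.η₁_nonneg hP.η₂_nonneg hP.lam_nonneg hp ht,
      hU.trans (by linarith [hP.bound_fst])⟩,
    opV_nonneg hP.η₂_nonneg hP.lam_nonneg hp ht, hV.trans (by linarith [hP.bound_snd])⟩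

theorem op_mono (hP : AdmissibleParams η₁ η₂ lam) (hp : InBox p) (hpq : LeOn p q)
    (hp₁ : Continuous p.1) (hp₂ : Continuous p.2) (hq₁ : Continuous q.1) (hq₂ : Continuous q.2) :
    LeOn (op η₁ η₂ lam p) (op η₁ η₂ lam q) := fun _ ht =>
  ⟨opU_mono hP.η₁_nonneg hP.η₂_nonneg hP.lam_nonneg hp hpq hp₁ hp₂ hq₁ hq₂ ht,
    opV_mono hP.η₂_nonneg hP.lam_nonneg hp hpq hp₁ hp₂ hq₁ hq₂ ht⟩

end Operator

section Iteration

def approx (η₁ η₂ lam : ℝ) (n : ℕ) : FunPair := (op η₁ η₂ lam)^[n] 0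

theorem approx_succ (n : ℕ) : approx η₁ η₂ lam (n + 1) = op η₁ η₂ lam (approx η₁ η₂ lam n) :=
  Function.iterate_succ_apply' _ _ _

theorem continuous_approx :
    ∀ n, Continuous (approx η₁ η₂ lam n).1 ∧ Continuous (approx η₁ η₂ lam n).2
  | 0 => ⟨continuous_const, continuous_const⟩
  | n + 1 => by
    obtain ⟨hp₁, hp₂⟩ := continuous_approx n
    rw [approx_succ]
    exact ⟨continuous_opU hp₁ hp₂, continuous_opV hp₁ hp₂⟩

theorem approx_inBox (hP : AdmissibleParams η₁ η₂ lam) : ∀ n, InBox (approx η₁ η₂ lam n)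
  | 0 => fun _ _ => ⟨left_mem_Icc.2 zero_le_one, left_mem_Icc.2 zero_le_one⟩
  | n + 1 => by
    rw [approx_succ]
    exact op_inBox hP (approx_inBox hP n) (continuous_approx n).1 (continuous_approx n).2

theorem approx_le_succ (hP : AdmissibleParams η₁ η₂ lam) :
    ∀ n, LeOn (approx η₁ η₂ lam n) (approx η₁ η₂ lam (n + 1))
  | 0 => fun t ht => ⟨(approx_inBox hP 1 t ht).1.1, (approx_inBox hP 1 t ht).2.1⟩
  | n + 1 => by
    rw [approx_succ, approx_succ (n + 1)]
    exact op_mono hP (approx_inBox hP n) (approx_le_succ hP n) (continuous_approx n).1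
      (continuous_approx n).2 (continuous_approx (n + 1)).1 (continuous_approx (n + 1)).2

def iterLimit (η₁ η₂ lam : ℝ) : FunPair :=
  (fun t => ⨆ n, (approx η₁ η₂ lam n).1 t, fun t => ⨆ n, (approx η₁ η₂ lam n).2 t)

theorem tendsto_approx (hP : AdmissibleParams η₁ η₂ lam) (ht : t ∈ I01) :
    Tendsto (fun n => (approx η₁ η₂ lam n).1 t) atTop (𝓝 ((iterLimit η₁ η₂ lam).1 t)) ∧
      Tendsto (fun n => (approx η₁ η₂ lam n).2 t) atTop (𝓝 ((iterLimit η₁ η₂ lam).2 t)) :=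
  ⟨tendsto_atTop_ciSup (monotone_nat_of_le_succ fun n => (approx_le_succ hP n t ht).1)
      ⟨1, forall_mem_range.2 fun n => (approx_inBox hP n t ht).1.2⟩,
    tendsto_atTop_ciSup (monotone_nat_of_le_succ fun n => (approx_le_succ hP n t ht).2)
      ⟨1, forall_mem_range.2 fun n => (approx_inBox hP n t ht).2.2⟩⟩

theorem iterLimit_inBox (hP : AdmissibleParams η₁ η₂ lam) : InBox (iterLimit η₁ η₂ lam) :=
  fun t ht => ⟨isClosed_Icc.mem_of_tendsto (tendsto_approx hP ht).1
      (.of_forall fun n => (approx_inBox hP n t ht).1),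
    isClosed_Icc.mem_of_tendsto (tendsto_approx hP ht).2
      (.of_forall fun n => (approx_inBox hP n t ht).2)⟩

theorem measurable_iterLimit :
    Measurable (iterLimit η₁ η₂ lam).1 ∧ Measurable (iterLimit η₁ η₂ lam).2 :=
  ⟨.iSup fun n => (continuous_approx n).1.measurable,
    .iSup fun n => (continuous_approx n).2.measurable⟩

end Iteration

section Convergence

variable {P : ℕ → FunPair} (hc₁ : ∀ n, Continuous (P n).1) (hc₂ : ∀ n, Continuous (P n).2)
  (hbox : ∀ n, InBox (P n))
  (hlim₁ : ∀ s ∈ I01, Tendsto (fun n => (P n).1 s) atTop (𝓝 (p.1 s)))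
  (hlim₂ : ∀ s ∈ I01, Tendsto (fun n => (P n).2 s) atTop (𝓝 (p.2 s)))
include hlim₁ hlim₂

theorem tendsto_h₁ : Tendsto (fun n => h₁ (P n)) atTop (𝓝 (h₁ p)) :=
  (hlim₁ _ (by norm_num)).add ((hlim₂ _ (by norm_num)).pow 2)

theorem tendsto_nonlin (hs : s ∈ I01) : Tendsto (fun n => nonlin (P n) s) atTop (𝓝 (nonlin p s)) :=
  (Real.continuous_exp.tendsto _).comp (((hlim₁ s hs).add (hlim₂ s hs)).const_mul s)

include hc₁ hc₂ hbox

theorem tendsto_h₂ : Tendsto (fun n => h₂ (P n)) atTop (𝓝 (h₂ p)) := by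
  refine tendsto_intervalIntegral_of_norm_le_const (C := 2)
    (fun n => (((hc₁ n).pow 3).add (hc₂ n)).continuousOn) (fun n s hs => ?_) (fun s hs => ?_)
  all_goals rw [uIcc_zero_one] at hs
  · exact norm_h₂_integrand_le_two (hbox n) hs
  · exact ((hlim₁ s hs).pow 3).add (hlim₂ s hs)

theorem tendsto_opV (ht : t ∈ I01) :
    Tendsto (fun n => opV η₂ lam (P n) t) atTop (𝓝 (opV η₂ lam p t)) := by
  have hsub : uIcc t 1 ⊆ I01 := by
    rw [uIcc_of_le ht.2]; exact Icc_subset_Icc_left ht.1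
  refine ((tendsto_h₂ hc₁ hc₂ hbox hlim₁ hlim₂).const_mul η₂).add
    (Tendsto.const_mul lam (tendsto_intervalIntegral_of_norm_le_const
      (fun n => (continuous_nonlin (hc₁ n) (hc₂ n)).continuousOn)
      (fun n s hs => norm_nonlin_le_exp_two (hbox n) (hsub hs))
      (fun s hs => tendsto_nonlin hlim₁ hlim₂ (hsub hs))))

theorem tendsto_opU (hP : AdmissibleParams η₁ η₂ lam) (ht : t ∈ I01) :
    Tendsto (fun n => opU η₁ η₂ lam (P n) t) atTop (𝓝 (opU η₁ η₂ lam p t)) := by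
  have hsub : uIcc 0 t ⊆ I01 := by
    rw [uIcc_of_le ht.1]; exact Icc_subset_Icc_right ht.2
  refine ((tendsto_h₁ hlim₁ hlim₂).const_mul η₁).add
    (tendsto_intervalIntegral_of_norm_le_const (C := 1)
      (fun n => (continuous_opV (hc₁ n) (hc₂ n)).continuousOn) (fun n s hs => ?_)
      (fun s hs => tendsto_opV hc₁ hc₂ hbox hlim₁ hlim₂ (hsub hs)))
  obtain ⟨h₀, h₁⟩ := (op_inBox hP (hbox n) (hc₁ n) (hc₂ n) s (hsub hs)).2
  show ‖(op η₁ η₂ lam (P n)).2 s‖ ≤ 1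
  rwa [Real.norm_of_nonneg h₀]

end Convergence

theorem iterLimit_fixed (hP : AdmissibleParams η₁ η₂ lam) :
    EqOn (iterLimit η₁ η₂ lam).1 (opU η₁ η₂ lam (iterLimit η₁ η₂ lam)) I01 ∧
      EqOn (iterLimit η₁ η₂ lam).2 (opV η₂ lam (iterLimit η₁ η₂ lam)) I01 := by
  have hc₁ : ∀ n, Continuous (approx η₁ η₂ lam n).1 := fun n => (continuous_approx n).1
  have hc₂ : ∀ n, Continuous (approx η₁ η₂ lam n).2 := fun n => (continuous_approx n).2
  have hlim₁ s (hs : s ∈ I01) := (tendsto_approx hP hs).1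
  have hlim₂ s (hs : s ∈ I01) := (tendsto_approx hP hs).2
  refine ⟨fun t ht => tendsto_nhds_unique ((tendsto_add_atTop_iff_nat 1).2 (hlim₁ t ht)) ?_,
    fun t ht => tendsto_nhds_unique ((tendsto_add_atTop_iff_nat 1).2 (hlim₂ t ht)) ?_⟩
  · simp only [approx_succ]
    exact tendsto_opU hc₁ hc₂ (approx_inBox hP) hlim₁ hlim₂ hP ht
  · simp only [approx_succ]
    exact tendsto_opV hc₁ hc₂ (approx_inBox hP) hlim₁ hlim₂ ht

section Regularity

theorem integrableOn_nonlin (hp₁ : Measurable p.1) (hp₂ : Measurable p.2) (hp : InBox p) :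
    IntegrableOn (nonlin p) I01 :=
  Measure.integrableOn_of_bounded measure_Icc_lt_top.ne
    (measurable_nonlin hp₁ hp₂).aestronglyMeasurable
    ((ae_restrict_iff' measurableSet_Icc).2 (ae_of_all _ fun _ hs => norm_nonlin_le_exp_two hp hs))

theorem continuousOn_opV (hG : IntegrableOn (nonlin p) I01) : ContinuousOn (opV η₂ lam p) I01 := by
  rw [← uIcc_zero_one] at hG ⊢
  exact continuousOn_const.add
    (continuousOn_const.mul (intervalIntegral.continuousOn_primitive_interval_left hG))

theorem continuousOn_opU (hV : ContinuousOn (opV η₂ lam p) I01) :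
    ContinuousOn (opU η₁ η₂ lam p) I01 := by
  have hV' : IntegrableOn (opV η₂ lam p) I01 := hV.integrableOn_Icc
  rw [← uIcc_zero_one] at hV' ⊢
  exact continuousOn_const.add (intervalIntegral.continuousOn_primitive_interval hV')

theorem hasDerivWithinAt_opU (hV : ContinuousOn (opV η₂ lam p) I01) (ht : t ∈ I01) :
    HasDerivWithinAt (opU η₁ η₂ lam p) (opV η₂ lam p t) I01 t :=
  (hasDerivWithinAt_integral_Icc_right hV ht).const_add _

theorem hasDerivWithinAt_opV (hG : ContinuousOn (nonlin p) I01) (ht : t ∈ I01) :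
    HasDerivWithinAt (opV η₂ lam p) (-(lam * nonlin p t)) I01 t :=
  (((hasDerivWithinAt_integral_Icc_left hG ht).const_mul lam).const_add (η₂ * h₂ p)).congr_deriv
    (mul_neg _ _)

structure IsSolution (η₁ η₂ lam : ℝ) (p : FunPair) : Prop where
  continuousOn_fst : ContinuousOn p.1 I01
  continuousOn_snd : ContinuousOn p.2 I01
  hasDerivWithinAt_fst : ∀ t ∈ I01, HasDerivWithinAt p.1 (p.2 t) I01 t
  hasDerivWithinAt_snd : ∀ t ∈ I01, HasDerivWithinAt p.2 (-(lam * nonlin p t)) I01 t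
  fst_zero : p.1 0 = η₁ * h₁ p
  snd_one : p.2 1 = η₂ * h₂ p

theorem isSolution_of_eqOn_op (hp₁ : Measurable p.1) (hp₂ : Measurable p.2) (hp : InBox p)
    (hfix₁ : EqOn p.1 (opU η₁ η₂ lam p) I01) (hfix₂ : EqOn p.2 (opV η₂ lam p) I01) :
    IsSolution η₁ η₂ lam p := by
  have hV := continuousOn_opV (η₂ := η₂) (lam := lam) (integrableOn_nonlin hp₁ hp₂ hp)
  have hc₁ : ContinuousOn p.1 I01 := (continuousOn_opU hV).congr hfix₁
  have hc₂ : ContinuousOn p.2 I01 := hV.congr hfix₂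
  refine ⟨hc₁, hc₂, fun t ht => ?_, fun t ht => ?_, ?_, ?_⟩
  · rw [hfix₂ ht]
    exact (hasDerivWithinAt_opU hV ht).congr hfix₁ (hfix₁ ht)
  · exact (hasDerivWithinAt_opV (continuousOn_nonlin hc₁ hc₂) ht).congr hfix₂ (hfix₂ ht)
  · simp [hfix₁ (left_mem_Icc.2 zero_le_one), opU]
  · simp [hfix₂ (right_mem_Icc.2 zero_le_one), opV]

end Regularity

theorem exists_isSolution (hP : AdmissibleParams η₁ η₂ lam) :
    ∃ p, InBox p ∧ IsSolution η₁ η₂ lam p ∧ lam ≤ p.2 0 := by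
  have hbox := iterLimit_inBox hP
  obtain ⟨hfix₁, hfix₂⟩ := iterLimit_fixed hP
  have hsol := isSolution_of_eqOn_op measurable_iterLimit.1 measurable_iterLimit.2 hbox
    hfix₁ hfix₂
  have hG := continuousOn_nonlin hsol.continuousOn_fst hsol.continuousOn_snd
  rw [← uIcc_zero_one] at hG
  refine ⟨_, hbox, hsol, ?_⟩
  rw [hfix₂ (left_mem_Icc.2 zero_le_one)]
  exact lam_le_opV_zero hP.η₂_nonneg hP.lam_nonneg hbox hG.intervalIntegrable

def restrictI01 (f : ℝ → ℝ) (hf : ContinuousOn f I01) : C(I01, ℝ) :=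
  ⟨I01.domRestrict f, hf.domRestrict⟩

theorem ext01_restrictI01 {f : ℝ → ℝ} (hf : ContinuousOn f I01) :
    EqOn (ext01 (restrictI01 f hf)) f I01 := fun t ht => by
  rw [ext01, IccExtend_of_mem _ _ ht]
  rfl

theorem norm_restrictI01_le_one {f : ℝ → ℝ} (hf : ContinuousOn f I01) (hmaps : MapsTo f I01 I01) :
    ‖restrictI01 f hf‖ ≤ 1 :=
  (ContinuousMap.norm_le _ zero_le_one).2 fun t => by
    show ‖f t‖ ≤ 1
    rw [Real.norm_of_nonneg (hmaps t.2).1]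
    exact (hmaps t.2).2

end ExpBVP

open ExpBVP

/-- Example 3.1 in the paper: for parameters with
`max {λe²/2 + 2η₁ + 2η₂, λe² + 2η₂} ≤ 1` and `λ ≥ 1/10`, the BVP
`u'' + λ e^{t(u+u')} = 0`, `u(0) = η₁(u(1/4) + u'(3/4)²)`, `u'(1) = η₂ ∫₀¹ (u³ + u')`
has a non-negative non-decreasing solution `u` with `1/20 ≤ ‖u‖ ≤ 1`. -/
theorem example_existence
    (η₁ η₂ lam : ℝ) (hη₁ : 0 ≤ η₁) (hη₂ : 0 ≤ η₂)
    (hmax : max (lam * (Real.exp 2 / 2) + 2 * η₁ + 2 * η₂)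
      (lam * Real.exp 2 + 2 * η₂) ≤ 1)
    (hlam : 1/10 ≤ lam) :
    ∃ p ∈ coneP, ∃ u'' : ℝ → ℝ,
      ContinuousOn u'' I01 ∧
      (∀ t ∈ I01, HasDerivWithinAt (ext01 p.2) (u'' t) I01 t) ∧
      (∀ t ∈ I01, u'' t + lam * Real.exp (t * (ext01 p.1 t + ext01 p.2 t)) = 0) ∧
      p.1 ⟨0, by norm_num⟩ =
        η₁ * (p.1 ⟨1/4, by norm_num⟩ + (p.2 ⟨3/4, by norm_num⟩) ^ 2) ∧
      p.2 ⟨1, by norm_num⟩ =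
        η₂ * ∫ s in (0:ℝ)..1, ((ext01 p.1 s) ^ 3 + ext01 p.2 s) ∧
      1/20 ≤ ‖p‖ ∧ ‖p‖ ≤ 1 := by
  have hP : AdmissibleParams η₁ η₂ lam :=
    ⟨hη₁, hη₂, by linarith, (le_max_left _ _).trans hmax, (le_max_right _ _).trans hmax⟩
  obtain ⟨w, hbox, hsol, hlow⟩ := exists_isSolution hP
  set u := restrictI01 w.1 hsol.continuousOn_fst
  set v := restrictI01 w.2 hsol.continuousOn_snd
  have hu : EqOn (ext01 u) w.1 I01 := ext01_restrictI01 _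
  have hv : EqOn (ext01 v) w.2 I01 := ext01_restrictI01 _
  refine ⟨(u, v), ⟨fun t => (hsol.hasDerivWithinAt_fst t t.2).congr_of_mem hu t.2,
      fun t => ⟨(hbox t t.2).1.1, (hbox t t.2).2.1⟩⟩,
    fun t => -(lam * nonlin w t),
    ((continuousOn_nonlin hsol.continuousOn_fst hsol.continuousOn_snd).const_smul lam).neg,
    fun t ht => (hsol.hasDerivWithinAt_snd t ht).congr_of_mem hv ht,
    fun t ht => by simp only [nonlin, hu ht, hv ht]; ring,
    hsol.fst_zero, ?_, ?_, ?_⟩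
  · refine hsol.snd_one.trans (congrArg _ (intervalIntegral.integral_congr fun s hs => ?_))
    rw [uIcc_zero_one] at hs
    simp only [hu hs, hv hs]
  · calc (1/20 : ℝ) ≤ lam := by linarith
      _ ≤ w.2 0 := hlow
      _ ≤ ‖v‖ := (Real.le_norm_self _).trans (v.norm_coe_le_norm ⟨0, left_mem_Icc.2 zero_le_one⟩)
      _ ≤ ‖(u, v)‖ := norm_snd_le (u, v)
  · exact norm_prod_le_iff.2
      ⟨norm_restrictI01_le_one hsol.continuousOn_fst fun t ht => (hbox t ht).1,
        norm_restrictI01_le_one hsol.continuousOn_snd fun t ht => (hbox t ht).2⟩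
end
end

section
/- Let f(t,u,v) := u·(2 − t·sin(uv)), h1[u] := u(1/4)·cos²(u'(3/4)), h2[u] := u(3/4)·sin²(u'(1/4)), and suppose λ, η1, η2 ≥ 0 satisfy (3/2)·λ + η1 + η2 < 1. Then the only solution of the boundary value problem u''(t) + λ u(t)(2 − t sin(u(t)u'(t))) = 0, u(0) = η1 h1[u], u'(1) = η2 h2[u] that is non-negative and non-decreasing on [0,1] is the zero function. In particular this holds for λ = 1/3, η1 = 1/4, η2 = 1/5. -/
/-!
Let `A = u(1)`, the maximum of the non-decreasing function `u`. Since `0 ≤ u ≤ A` and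
`0 ≤ 2 - t sin(u u') ≤ 3` on `[0,1]`, the equation gives `u'' ≥ -3λA`. Integrating twice from
the right end point, `u(1) - u(0) ≤ u'(1) + (3/2)λA`, while the boundary conditions give
`u(0) ≤ η₁A` and `u'(1) ≤ η₂A`. Hence `A ≤ ((3/2)λ + η₁ + η₂) A`, which forces `A = 0`.
-/

open MeasureTheory Set Bornology

noncomputable section

theorem Convex.monotoneOn_of_forall_hasDerivWithinAt_nonneg {D : Set ℝ} (hD : Convex ℝ D)
    {f f' : ℝ → ℝ} (hf : ∀ x ∈ D, HasDerivWithinAt f (f' x) D x) (hf' : ∀ x ∈ D, 0 ≤ f' x) :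
    MonotoneOn f D :=
  monotoneOn_of_hasDerivWithinAt_nonneg hD (fun x hx => (hf x hx).continuousWithinAt)
    (fun x hx => (hf x (interior_subset hx)).mono interior_subset)
    (fun x hx => hf' x (interior_subset hx))

theorem Convex.image_sub_le_image_sub_of_hasDerivWithinAt_le {D : Set ℝ} (hD : Convex ℝ D)
    {f g f' g' : ℝ → ℝ} (hf : ∀ x ∈ D, HasDerivWithinAt f (f' x) D x)
    (hg : ∀ x ∈ D, HasDerivWithinAt g (g' x) D x) (hle : ∀ x ∈ D, f' x ≤ g' x)
    {x y : ℝ} (hx : x ∈ D) (hy : y ∈ D) (hxy : x ≤ y) :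
    f y - f x ≤ g y - g x := by
  have hmono : MonotoneOn (fun z => g z - f z) D :=
    hD.monotoneOn_of_forall_hasDerivWithinAt_nonneg (fun z hz => (hg z hz).sub (hf z hz))
      (fun z hz => sub_nonneg.2 (hle z hz))
  linarith [hmono hx hy hxy]

theorem image_sub_le_of_neg_le_second_deriv {u v w : ℝ → ℝ} {a b c : ℝ} (hab : a ≤ b)
    (hu : ∀ x ∈ Icc a b, HasDerivWithinAt u (v x) (Icc a b) x)
    (hv : ∀ x ∈ Icc a b, HasDerivWithinAt v (w x) (Icc a b) x)
    (hw : ∀ x ∈ Icc a b, -c ≤ w x) :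
    u b - u a ≤ v b * (b - a) + c * (b - a) ^ 2 / 2 := by
  have hb : b ∈ Icc a b := right_mem_Icc.2 hab
  have hslope : ∀ x ∈ Icc a b, v x ≤ v b + c * (b - x) := by
    intro x hx
    have := (convex_Icc a b).image_sub_le_image_sub_of_hasDerivWithinAt_le
      (f := fun z => -c * z) (fun z _ => (hasDerivWithinAt_id z _).const_mul (-c)) hv
      (by simpa using hw) hx hb hx.2
    linarith
  set B : ℝ → ℝ := fun x => v b * x - c * (b - x) ^ 2 / 2
  have hB : ∀ x ∈ Icc a b, HasDerivWithinAt B (v b + c * (b - x)) (Icc a b) x := by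
    intro x _
    have := ((hasDerivAt_id' x).const_mul (v b)).sub
      ((((hasDerivAt_const x b).sub (hasDerivAt_id' x)).pow 2).const_mul c |>.div_const 2)
    exact (this.congr_deriv (by norm_num; ring)).hasDerivWithinAt
  have := (convex_Icc a b).image_sub_le_image_sub_of_hasDerivWithinAt_le hu hB hslope
    (left_mem_Icc.2 hab) hb hab
  simp only [B] at this
  linarith

theorem mul_two_sub_mul_sin_le {x A t y : ℝ} (hx : 0 ≤ x) (hxA : x ≤ A) (ht : |t| ≤ 1) :
    x * (2 - t * Real.sin y) ≤ 3 * A := by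
  have hts : |t * Real.sin y| ≤ 1 := by
    rw [abs_mul]
    exact mul_le_one₀ ht (abs_nonneg _) (Real.abs_sin_le_one y)
  calc x * (2 - t * Real.sin y) ≤ x * 3 :=
        mul_le_mul_of_nonneg_left (by linarith [(abs_le.1 hts).1]) hx
    _ ≤ 3 * A := by linarith

theorem ext01_coe (g : C(I01, ℝ)) (t : I01) : ext01 g t = g t :=
  Set.IccExtend_val _ _ t

theorem ext01_nonneg {g : C(I01, ℝ)} (hg : ∀ t, 0 ≤ g t) (x : ℝ) : 0 ≤ ext01 g x :=
  hg _

theorem hasDerivWithinAt_of_mem_coneP {p : E} (hp : p ∈ coneP) {t : ℝ} (ht : t ∈ I01) :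
    HasDerivWithinAt (ext01 p.1) (ext01 p.2 t) I01 t :=
  (ext01_coe p.2 ⟨t, ht⟩).symm ▸ hp.1 ⟨t, ht⟩

theorem monotoneOn_of_mem_coneP {p : E} (hp : p ∈ coneP) : MonotoneOn (ext01 p.1) I01 :=
  (convex_Icc 0 1).monotoneOn_of_forall_hasDerivWithinAt_nonneg
    (fun _ ht => hasDerivWithinAt_of_mem_coneP hp ht)
    (fun _ _ => ext01_nonneg (fun t => (hp.2 t).2) _)

theorem fst_le_fst_one_of_mem_coneP {p : E} (hp : p ∈ coneP) (t : I01) :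
    p.1 t ≤ p.1 ⟨1, by norm_num⟩ :=
  calc p.1 t = ext01 p.1 t := (ext01_coe _ _).symm
    _ ≤ ext01 p.1 (⟨1, by norm_num⟩ : I01) :=
      monotoneOn_of_mem_coneP hp t.2 (right_mem_Icc.2 zero_le_one) t.2.2
    _ = p.1 ⟨1, by norm_num⟩ := ext01_coe _ _

/-- Example 3.2 in the paper: for parameters with `(3/2)λ + η₁ + η₂ < 1`, the only
non-negative, non-decreasing solution of the BVP
`u'' + λ u (2 - t sin(u u')) = 0`, `u(0) = η₁ u(1/4) cos²(u'(3/4))`,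
`u'(1) = η₂ u(3/4) sin²(u'(1/4))` is the zero function. -/
theorem example_nonexistence
    (η₁ η₂ lam : ℝ) (hη₁ : 0 ≤ η₁) (hη₂ : 0 ≤ η₂) (hlam : 0 ≤ lam)
    (hlt : 3/2 * lam + η₁ + η₂ < 1) :
    ∀ p ∈ coneP, ∀ u'' : ℝ → ℝ,
      ContinuousOn u'' I01 →
      (∀ t ∈ I01, HasDerivWithinAt (ext01 p.2) (u'' t) I01 t) →
      (∀ t ∈ I01, u'' t +
        lam * (ext01 p.1 t * (2 - t * Real.sin (ext01 p.1 t * ext01 p.2 t))) = 0) →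
      p.1 ⟨0, by norm_num⟩ =
        η₁ * (p.1 ⟨1/4, by norm_num⟩ * (Real.cos (p.2 ⟨3/4, by norm_num⟩)) ^ 2) →
      p.2 ⟨1, by norm_num⟩ =
        η₂ * (p.1 ⟨3/4, by norm_num⟩ * (Real.sin (p.2 ⟨1/4, by norm_num⟩)) ^ 2) →
      ∀ t : I01, p.1 t = 0 := by
  intro p hp u'' _ hu'' hode hbc₀ hbc₁
  set A := p.1 ⟨1, by norm_num⟩
  have hmax : ∀ t : I01, p.1 t ≤ A := fst_le_fst_one_of_mem_coneP hp
  have hforce : ∀ t ∈ I01, -(3 * lam * A) ≤ u'' t := fun t ht => by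
    have hf := mul_two_sub_mul_sin_le (ext01_nonneg (fun s => (hp.2 s).1) t)
      ((ext01_coe p.1 ⟨t, ht⟩).trans_le (hmax _))
      (abs_le.2 ⟨by linarith [ht.1], ht.2⟩) (y := ext01 p.1 t * ext01 p.2 t)
    linarith [hode t ht, mul_le_mul_of_nonneg_left hf hlam]
  have hgrowth := image_sub_le_of_neg_le_second_deriv zero_le_one
    (fun t ht => hasDerivWithinAt_of_mem_coneP hp ht) hu'' hforce
  have hleft : p.1 ⟨0, by norm_num⟩ ≤ η₁ * A := hbc₀ ▸ mul_le_mul_of_nonneg_left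
    ((mul_le_of_le_one_right (hp.2 _).1 (Real.cos_sq_le_one _)).trans (hmax _)) hη₁
  have hright : p.2 ⟨1, by norm_num⟩ ≤ η₂ * A := hbc₁ ▸ mul_le_mul_of_nonneg_left
    ((mul_le_of_le_one_right (hp.2 _).1 (Real.sin_sq_le_one _)).trans (hmax _)) hη₂
  have hA : A = 0 := by
    simp only [ext01, Set.IccExtend_right, Set.IccExtend_left] at hgrowth
    nlinarith [(hp.2 ⟨1, by norm_num⟩).1]
  exact fun t => le_antisymm (hA ▸ hmax t) (hp.2 t).1
end
end
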